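/- Let W = (W_i)_{i=1}^∞ be a non-negative, non-increasing sequence converging to 0 and L̃ = (L̃_i)_{i=1}^∞ a non-negative, non-decreasing sequence. Let p ∈ 𝒟_d ∩ 𝔙(W, L̃) and let b, k ∈ ℕ. Then there exists h ∈ ℋ^k_{d,b} with ‖p − h‖_1 ≤ d·L̃_k/(√12 · b) + 2 W_k. -/

import Mathlib

open MeasureTheory Filter Finset

noncomputable section

/-- A pdf on `ℝ`: a Lebesgue-measurable, a.e. non-negative function with integral one. -/
def IsPdf1 (f : ℝ → ℝ) : Prop :=
  Measurable f ∧ (∀ᵐ x ∂(volume : Measure ℝ), 0 ≤ f x) ∧ ∫ x, f x = 1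

/-- Membership in `𝒟_d`: a pdf on `ℝ^d` supported on the unit cube `[0,1]^d`. -/
def MemD (d : ℕ) (p : (Fin d → ℝ) → ℝ) : Prop :=
  Measurable p ∧ (∀ᵐ x ∂(volume : Measure (Fin d → ℝ)), 0 ≤ p x) ∧ (∫ x, p x = 1) ∧
    ∀ x, x ∉ Set.Icc (0 : Fin d → ℝ) 1 → p x = 0

/-- `p` has NL-spectrum `(w, L)` (sequences `0`-indexed: index `i` is the paper's `i+1`). -/
def HasNLSpectrum (d : ℕ) (p : (Fin d → ℝ) → ℝ) (w L : ℕ → ℝ) : Prop :=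
  ∃ q : ℕ → Fin d → ℝ → ℝ,
    (∀ i, 0 ≤ w i) ∧ 0 < w 0 ∧ HasSum w 1 ∧
    (∀ i j, IsPdf1 (q i j) ∧ ∀ x y, |q i j x - q i j y| ≤ L i * |x - y|) ∧
    ∀ᵐ x ∂(volume : Measure (Fin d → ℝ)), p x = ∑' i, w i * ∏ j, q i j (x j)

/-- Membership in the NL-class `𝔙(W, L̃)` (sequences `0`-indexed). -/
def MemNLClass (d : ℕ) (p : (Fin d → ℝ) → ℝ) (W Lt : ℕ → ℝ) : Prop :=
  ∃ w L : ℕ → ℝ, HasNLSpectrum d p w L ∧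
    ∀ k : ℕ, L k ≤ Lt k ∧ (∑' i, w (i + (k + 1))) ≤ W k

/-- Membership in `ℋ_{1,b}`: a pdf on `[0,1]` constant on each bin `[(i-1)/b, i/b)`. -/
def IsHist1 (b : ℕ) (h : ℝ → ℝ) : Prop :=
  ∃ c : Fin b → ℝ, (∀ i, 0 ≤ c i) ∧
    (∀ x, h x = ∑ i : Fin b,
      c i * Set.indicator (Set.Ico ((i.val : ℝ) / b) (((i.val : ℝ) + 1) / b)) 1 x) ∧
    ∫ x, h x = 1

/-- Membership in `ℋ^k_{d,b}`: a convex combination of `k` products of `d` histograms. -/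
def IsLowRankHist (d b k : ℕ) (q : (Fin d → ℝ) → ℝ) : Prop :=
  ∃ (w : Fin k → ℝ) (h : Fin k → Fin d → ℝ → ℝ),
    (∀ i, 0 ≤ w i) ∧ (∑ i, w i = 1) ∧ (∀ i j, IsHist1 b (h i j)) ∧
    ∀ x, q x = ∑ i, w i * ∏ j, h i j (x j)

/-! Replace each factor `q` of a mixture component by its bin averages. On a bin of width `s`,
the identity `∬ (q x - q y)² = 2 s ∫ (q - q̄)²` and the Lipschitz bound `|q x - q y| ≤ L |x - y|`
give `∫ (q - q̄)² ≤ L² s³ / 12`, so by Cauchy–Schwarz the `L¹` error on the bin is at most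
`L s² / √12`; summing over the `b` bins gives `L / (√12 b)`. Swapping the `d` factors of a product
one at a time costs the sum of the factor errors, `d L / (√12 b)`. Finally the components after
the `k`-th are dropped and their total weight `T ≤ W k` is moved onto the `k`-th component, which
costs `T` twice. Bin averages of a factor only add up to one because the factor lives on `[0,1]`;
this follows from the support of `p` for every component of positive weight. -/

open scoped NNReal

lemma MeasureTheory.Integrable.of_integral_eq_one {α : Type*} [MeasurableSpace α]
    {μ : Measure α} {f : α → ℝ} (h : ∫ x, f x ∂μ = 1) : Integrable f μ :=
  .of_integral_ne_zero (by rw [h]; exact one_ne_zero)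

section Variance

variable {α : Type*} [MeasurableSpace α] {μ : Measure α} [IsFiniteMeasure μ] {φ : α → ℝ}

lemma integral_sub_sq_eq (hφ : Integrable φ μ) (hφ2 : Integrable (fun x => φ x ^ 2) μ) (x : α) :
    ∫ y, (φ x - φ y) ^ 2 ∂μ =
      μ.real Set.univ * φ x ^ 2 - 2 * φ x * ∫ y, φ y ∂μ + ∫ y, φ y ^ 2 ∂μ := by
  have hlin : Integrable (fun y => φ x ^ 2 - 2 * φ x * φ y) μ :=
    (integrable_const _).sub (hφ.const_mul _)
  have hexpand : ∀ y, (φ x - φ y) ^ 2 = (φ x ^ 2 - 2 * φ x * φ y) + φ y ^ 2 := fun y => by ring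
  simp_rw [hexpand]
  rw [integral_add hlin hφ2, integral_sub (integrable_const _) (hφ.const_mul _), integral_const,
    integral_const_mul, smul_eq_mul]

lemma integrable_integral_sub_sq (hφ : Integrable φ μ) (hφ2 : Integrable (fun x => φ x ^ 2) μ) :
    Integrable (fun x => ∫ y, (φ x - φ y) ^ 2 ∂μ) μ := by
  simp_rw [integral_sub_sq_eq hφ hφ2]
  exact ((hφ2.const_mul _).sub ((hφ.const_mul _).mul_const _)).add (integrable_const _)

lemma integral_integral_sub_sq (hφ : Integrable φ μ) (hφ2 : Integrable (fun x => φ x ^ 2) μ) :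
    ∫ x, ∫ y, (φ x - φ y) ^ 2 ∂μ ∂μ =
      2 * μ.real Set.univ * ∫ x, φ x ^ 2 ∂μ - 2 * (∫ x, φ x ∂μ) ^ 2 := by
  have hquad : Integrable (fun x => μ.real Set.univ * φ x ^ 2 - 2 * φ x * ∫ y, φ y ∂μ) μ :=
    (hφ2.const_mul _).sub ((hφ.const_mul _).mul_const _)
  simp_rw [integral_sub_sq_eq hφ hφ2]
  rw [integral_add hquad (integrable_const _),
    integral_sub (hφ2.const_mul _) ((hφ.const_mul _).mul_const _), integral_const,
    integral_const_mul, integral_mul_const, integral_const_mul, smul_eq_mul]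
  ring

lemma sq_integral_le_measureReal_mul_integral_sq (hφ : Integrable φ μ)
    (hφ2 : Integrable (fun x => φ x ^ 2) μ) :
    (∫ x, φ x ∂μ) ^ 2 ≤ μ.real Set.univ * ∫ x, φ x ^ 2 ∂μ := by
  have hnonneg : 0 ≤ ∫ x, ∫ y, (φ x - φ y) ^ 2 ∂μ ∂μ :=
    integral_nonneg fun x => integral_nonneg fun y => sq_nonneg _
  linarith [integral_integral_sub_sq hφ hφ2]

end Variance

section Interval

variable {f : ℝ → ℝ} {K : ℝ≥0} {u s : ℝ}

lemma two_mul_integral_Ioc_sq_sub_sq_integral (c : ℝ) (hs : 0 ≤ s) :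
    2 * s * (∫ x in Set.Ioc u (u + s), (c * x) ^ 2) - 2 * (∫ x in Set.Ioc u (u + s), c * x) ^ 2
      = c ^ 2 * s ^ 4 / 6 := by
  have hle : u ≤ u + s := by linarith
  rw [← intervalIntegral.integral_of_le hle, ← intervalIntegral.integral_of_le hle]
  simp only [mul_pow, intervalIntegral.integral_const_mul, integral_pow]
  rw [intervalIntegral.integral_const_mul c (fun x => x), integral_id]
  ring

lemma integral_sq_sub_average_le (hf : LipschitzWith K f) (hs : 0 < s) :
    ∫ x in Set.Ioc u (u + s), (f x - (∫ y in Set.Ioc u (u + s), f y) / s) ^ 2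
      ≤ K ^ 2 * s ^ 3 / 12 := by
  set μ := volume.restrict (Set.Ioc u (u + s))
  have hμ : μ.real Set.univ = s := by simp [μ, measureReal_def, hs.le]
  set g := fun x => f x - (∫ y, f y ∂μ) / s
  have hgc : Continuous g := hf.continuous.sub continuous_const
  have hg : Integrable g μ := hgc.integrableOn_Ioc
  have hg2 : Integrable (fun x => g x ^ 2) μ := (hgc.pow 2).integrableOn_Ioc
  have hK : Integrable (fun x : ℝ => (K : ℝ) * x) μ := (continuous_const_mul _).integrableOn_Ioc
  have hK2 : Integrable (fun x : ℝ => ((K : ℝ) * x) ^ 2) μ :=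
    ((continuous_const_mul _).pow 2).integrableOn_Ioc
  have hg0 : ∫ x, g x ∂μ = 0 := by
    rw [integral_sub hf.continuous.integrableOn_Ioc (integrable_const _), integral_const, hμ,
      smul_eq_mul]
    field_simp
    ring
  suffices 2 * s * ∫ x, g x ^ 2 ∂μ ≤ K ^ 2 * s ^ 4 / 6 by nlinarith
  calc 2 * s * ∫ x, g x ^ 2 ∂μ = ∫ x, ∫ y, (g x - g y) ^ 2 ∂μ ∂μ := by
        rw [integral_integral_sub_sq hg hg2, hμ, hg0]; ring
    _ ≤ ∫ x, ∫ y, (K * x - K * y) ^ 2 ∂μ ∂μ := by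
        refine integral_mono (integrable_integral_sub_sq hg hg2)
          (integrable_integral_sub_sq hK hK2) fun x => integral_mono
          ((continuous_const.sub hgc).pow 2).integrableOn_Ioc
          ((continuous_const.sub (continuous_const_mul _)).pow 2).integrableOn_Ioc fun y => ?_
        rw [sq_le_sq, ← mul_sub, abs_mul, NNReal.abs_eq, ← Real.dist_eq, ← Real.dist_eq]
        simpa only [g, dist_sub_right] using hf.dist_le_mul x y
    _ = K ^ 2 * s ^ 4 / 6 := by
        rw [integral_integral_sub_sq hK hK2, hμ, two_mul_integral_Ioc_sq_sub_sq_integral _ hs.le]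

lemma integral_abs_sub_average_le (hf : LipschitzWith K f) (hs : 0 < s) :
    ∫ x in Set.Ioc u (u + s), |f x - (∫ y in Set.Ioc u (u + s), f y) / s|
      ≤ K * s ^ 2 / Real.sqrt 12 := by
  set μ := volume.restrict (Set.Ioc u (u + s))
  set g := fun x => f x - (∫ y, f y ∂μ) / s
  have hgc : Continuous g := hf.continuous.sub continuous_const
  have hcs := sq_integral_le_measureReal_mul_integral_sq (μ := μ) hgc.abs.integrableOn_Ioc
    (hgc.abs.pow 2).integrableOn_Ioc
  have hμ : μ.real Set.univ = s := by simp [μ, measureReal_def, hs.le]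
  simp only [sq_abs, hμ] at hcs
  rw [← pow_le_pow_iff_left₀ (integral_nonneg fun x => abs_nonneg _) (by positivity) two_ne_zero]
  calc (∫ x, |g x| ∂μ) ^ 2 ≤ s * ∫ x, g x ^ 2 ∂μ := hcs
    _ ≤ s * (K ^ 2 * s ^ 3 / 12) := by gcongr; exact integral_sq_sub_average_le hf hs
    _ = (K * s ^ 2 / Real.sqrt 12) ^ 2 := by
        rw [div_pow, Real.sq_sqrt (by norm_num)]; ring

end Interval

lemma Continuous.nonneg_of_ae_nonneg {X : Type*} [TopologicalSpace X] [MeasurableSpace X]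
    {μ : Measure X} [μ.IsOpenPosMeasure] {f : X → ℝ} (hf : Continuous f)
    (h : ∀ᵐ x ∂μ, 0 ≤ f x) (x : X) : 0 ≤ f x := by
  have hmax : (fun x => max (f x) 0) = f :=
    ((hf.max continuous_const).ae_eq_iff_eq μ hf).1 (h.mono fun x hx => max_eq_left hx)
  exact congrFun hmax x ▸ le_max_right _ _

section Histogram

variable {b : ℕ}

def histBin (b : ℕ) (i : Fin b) : Set ℝ := Set.Ico ((i.val : ℝ) / b) (((i.val : ℝ) + 1) / b)

def histogram (b : ℕ) (c : Fin b → ℝ) (x : ℝ) : ℝ :=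
  ∑ i : Fin b, c i * Set.indicator (histBin b i) 1 x

lemma measurableSet_histBin (i : Fin b) : MeasurableSet (histBin b i) := measurableSet_Ico

lemma histBin_ae_eq_Ioc (i : Fin b) :
    histBin b i =ᵐ[volume] Set.Ioc ((i.val : ℝ) / b) ((i.val : ℝ) / b + 1 / b) := by
  rw [histBin, add_div]
  exact Ico_ae_eq_Ioc

lemma pairwise_disjoint_histBin : Pairwise fun i j => Disjoint (histBin b i) (histBin b j) := by
  intro i j hij
  wlog hlt : i < j generalizing i j
  · exact (this hij.symm ((Ne.symm hij).lt_of_le (not_lt.1 hlt))).symm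
  refine Set.disjoint_left.2 fun x hi hj => (hj.1.trans_lt hi.2).not_ge ?_
  gcongr
  exact_mod_cast Fin.lt_def.1 hlt

lemma iUnion_histBin (hb : 0 < b) : ⋃ i, histBin b i = Set.Ico 0 1 := by
  have hb' : (0 : ℝ) < b := by exact_mod_cast hb
  ext x
  simp only [Set.mem_iUnion, histBin, Set.mem_Ico]
  constructor
  · rintro ⟨i, hix, hxi⟩
    refine ⟨le_trans (by positivity) hix, hxi.trans_le ?_⟩
    rw [div_le_one hb']
    exact_mod_cast i.isLt
  · rintro ⟨hx0, hx1⟩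
    have hfloor : ⌊x * b⌋₊ < b := by
      rw [Nat.floor_lt (by positivity)]
      nlinarith
    refine ⟨⟨⌊x * b⌋₊, hfloor⟩, ?_, ?_⟩
    · rw [div_le_iff₀ hb']
      exact Nat.floor_le (by positivity)
    · rw [lt_div_iff₀ hb']
      exact Nat.lt_floor_add_one _

lemma histogram_eq_of_mem (c : Fin b → ℝ) {i : Fin b} {x : ℝ} (hx : x ∈ histBin b i) :
    histogram b c x = c i := by
  rw [histogram, Finset.sum_eq_single i]
  · simp [hx]
  · intro j _ hji
    simp [Set.disjoint_left.1 (pairwise_disjoint_histBin hji.symm) hx]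
  · simp

lemma histogram_eq_zero_of_notMem (hb : 0 < b) (c : Fin b → ℝ) {x : ℝ} (hx : x ∉ Set.Ico 0 1) :
    histogram b c x = 0 := by
  rw [← iUnion_histBin hb, Set.mem_iUnion, not_exists] at hx
  simp [histogram, hx]

lemma volume_real_histBin (i : Fin b) : volume.real (histBin b i) = 1 / b := by
  rw [histBin, Real.volume_real_Ico_of_le (by gcongr; linarith)]
  ring

lemma integrable_indicator_histBin (i : Fin b) :
    Integrable ((histBin b i).indicator (1 : ℝ → ℝ)) :=
  (integrable_indicator_iff (measurableSet_histBin i)).2 (integrableOn_const (by simp [histBin]))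

lemma integrable_histogram (c : Fin b → ℝ) : Integrable (histogram b c) :=
  integrable_finsetSum _ fun i _ => (integrable_indicator_histBin i).const_mul (c i)

lemma integral_histogram (c : Fin b → ℝ) : ∫ x, histogram b c x = (∑ i, c i) / b := by
  simp_rw [histogram]
  rw [integral_finsetSum _ fun i _ => (integrable_indicator_histBin i).const_mul (c i),
    Finset.sum_div]
  simp_rw [integral_const_mul, integral_indicator_one (measurableSet_histBin _),
    volume_real_histBin]
  simp only [mul_one_div]

lemma isHist1_histogram (hb : 0 < b) {c : Fin b → ℝ} (hc : ∀ i, 0 ≤ c i) (hsum : ∑ i, c i = b) :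
    IsHist1 b (histogram b c) :=
  ⟨c, hc, fun _ => rfl, by rw [integral_histogram, hsum, div_self (by positivity)]⟩

lemma IsHist1.nonneg {h : ℝ → ℝ} (hh : IsHist1 b h) (x : ℝ) : 0 ≤ h x := by
  obtain ⟨c, hc, hfun, -⟩ := hh
  rw [hfun]
  exact Finset.sum_nonneg fun i _ =>
    mul_nonneg (hc i) (Set.indicator_nonneg (fun _ _ => zero_le_one) x)

lemma IsHist1.integrable {h : ℝ → ℝ} (hh : IsHist1 b h) : Integrable h :=
  .of_integral_eq_one hh.choose_spec.2.2

lemma integral_eq_sum_histBin (hb : 0 < b) {F : ℝ → ℝ} (hF : Integrable F)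
    (hF0 : ∀ᵐ x, x ∉ Set.Ico (0 : ℝ) 1 → F x = 0) :
    ∫ x, F x = ∑ i, ∫ x in histBin b i, F x := by
  rw [← setIntegral_eq_integral_of_ae_compl_eq_zero hF0, ← iUnion_histBin hb,
    integral_iUnion_fintype measurableSet_histBin pairwise_disjoint_histBin
      fun _ => hF.integrableOn]

lemma integral_histBin_abs_sub_average_le (hb : 0 < b) {f : ℝ → ℝ} {K : ℝ≥0}
    (hf : LipschitzWith K f) (i : Fin b) :
    ∫ x in histBin b i, |f x - b * ∫ y in histBin b i, f y| ≤ K * (1 / b) ^ 2 / Real.sqrt 12 := by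
  have hbin := histBin_ae_eq_Ioc i
  rw [setIntegral_congr_set hbin, setIntegral_congr_set hbin]
  have hb' : (0 : ℝ) < b := by exact_mod_cast hb
  have havg : ∀ I : ℝ, b * I = I / (1 / b) := fun I => by field_simp
  simp_rw [havg]
  exact integral_abs_sub_average_le hf (by positivity)

theorem exists_isHist1_integral_abs_sub_le (hb : 0 < b) {f : ℝ → ℝ} {K : ℝ≥0}
    (hf : LipschitzWith K f) (hf0 : ∀ x, 0 ≤ f x) (hf1 : ∫ x, f x = 1)
    (hsupp : ∀ᵐ x, x ∉ Set.Icc (0 : ℝ) 1 → f x = 0) :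
    ∃ h, IsHist1 b h ∧ ∫ x, |f x - h x| ≤ K / (Real.sqrt 12 * b) := by
  have hsupp' : ∀ᵐ x, x ∉ Set.Ico (0 : ℝ) 1 → f x = 0 := by
    filter_upwards [hsupp, Ico_ae_eq_Icc.mem_iff] with x hx hmem hxIco
    exact hx (hmem.not.1 hxIco)
  have hfi : Integrable f := .of_integral_eq_one hf1
  set c := fun i => (b : ℝ) * ∫ x in histBin b i, f x
  have hc : ∀ i, 0 ≤ c i := fun i =>
    mul_nonneg (Nat.cast_nonneg _) (setIntegral_nonneg (measurableSet_histBin i) fun x _ => hf0 x)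
  have hsum : ∑ i, c i = b := by
    rw [← Finset.mul_sum, ← integral_eq_sum_histBin hb hfi hsupp', hf1, mul_one]
  refine ⟨histogram b c, isHist1_histogram hb hc hsum, ?_⟩
  have hdiff0 : ∀ᵐ x, x ∉ Set.Ico (0 : ℝ) 1 → |f x - histogram b c x| = 0 := by
    filter_upwards [hsupp'] with x hx hxI
    rw [hx hxI, histogram_eq_zero_of_notMem hb c hxI, sub_zero, abs_zero]
  rw [integral_eq_sum_histBin hb (F := fun x => |f x - histogram b c x|)
    (hfi.sub (integrable_histogram c)).abs hdiff0]
  calc ∑ i, ∫ x in histBin b i, |f x - histogram b c x|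
      = ∑ i, ∫ x in histBin b i, |f x - c i| :=
        Finset.sum_congr rfl fun i _ => setIntegral_congr_fun (measurableSet_histBin i)
          fun x hx => by rw [histogram_eq_of_mem c hx]
    _ ≤ ∑ _i : Fin b, K * (1 / b) ^ 2 / Real.sqrt 12 :=
        Finset.sum_le_sum fun i _ => integral_histBin_abs_sub_average_le hb hf i
    _ = K / (Real.sqrt 12 * b) := by
        rw [Finset.sum_const, Finset.card_univ, Fintype.card_fin, nsmul_eq_mul]
        field_simp

lemma exists_isHist1 (hb : 0 < b) : ∃ h, IsHist1 b h :=
  ⟨_, isHist1_histogram hb (c := fun _ => 1) (fun _ => zero_le_one) (by simp)⟩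

end Histogram

lemma abs_mul_sub_mul_le {a c A C : ℝ} (hc : 0 ≤ c) (hA : 0 ≤ A) :
    |a * A - c * C| ≤ |a - c| * A + c * |A - C| := by
  calc |a * A - c * C| = |(a - c) * A + c * (A - C)| := by congr 1; ring
    _ ≤ |a - c| * A + c * |A - C| := by
      refine (abs_add_le _ _).trans_eq ?_
      rw [abs_mul, abs_mul, abs_of_nonneg hA, abs_of_nonneg hc]

section Product

variable {E : Type*} [MeasurableSpace E] {μ : Measure E} [SigmaFinite μ]

lemma integral_prod_eval_eq_one {ι : Type*} [Fintype ι] {a : ι → E → ℝ}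
    (ha1 : ∀ i, ∫ t, a i t ∂μ = 1) :
    ∫ x, ∏ i, a i (x i) ∂Measure.pi (fun _ => μ) = 1 := by
  rw [integral_fintype_prod_eq_prod, Finset.prod_eq_one fun i _ => ha1 i]

theorem integral_abs_prod_sub_prod_le : ∀ {n : ℕ} {a c : Fin n → E → ℝ},
    (∀ i t, 0 ≤ a i t) → (∀ i t, 0 ≤ c i t) → (∀ i, Integrable (a i) μ) →
    (∀ i, Integrable (c i) μ) → (∀ i, ∫ t, a i t ∂μ = 1) → (∀ i, ∫ t, c i t ∂μ = 1) →
    ∫ x, |∏ i, a i (x i) - ∏ i, c i (x i)| ∂Measure.pi (fun _ => μ) ≤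
      ∑ i, ∫ t, |a i t - c i t| ∂μ
  | 0, _, _, _, _, _, _, _, _ => by simp
  | n + 1, a, c, ha0, hc0, ha, hc, ha1, hc1 => by
    rw [← ((measurePreserving_piFinSuccAbove (fun _ => μ) 0).symm).integral_comp',
      Fin.sum_univ_succ]
    simp_rw [MeasurableEquiv.piFinSuccAbove_symm_apply, Fin.insertNthEquiv, Fin.prod_univ_succ,
      Fin.insertNth_zero, Equiv.coe_fn_mk, Fin.cons_succ, Fin.cons_zero]
    set A := fun y : Fin n → E => ∏ i, a i.succ (y i)
    set C := fun y : Fin n → E => ∏ i, c i.succ (y i)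
    have hA : Integrable A (Measure.pi fun _ => μ) := Integrable.fintype_prod fun i => ha i.succ
    have hC : Integrable C (Measure.pi fun _ => μ) := Integrable.fintype_prod fun i => hc i.succ
    have hA1 : ∫ y, A y ∂Measure.pi (fun _ => μ) = 1 :=
      integral_prod_eval_eq_one fun i => ha1 i.succ
    have hfirst : Integrable (fun z : E × (Fin n → E) => |a 0 z.1 - c 0 z.1| * A z.2)
        (μ.prod (Measure.pi fun _ => μ)) := ((ha 0).sub (hc 0)).abs.mul_prod hA
    have hsecond : Integrable (fun z : E × (Fin n → E) => c 0 z.1 * |A z.2 - C z.2|)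
        (μ.prod (Measure.pi fun _ => μ)) := (hc 0).mul_prod (hA.sub hC).abs
    calc _ ≤ ∫ z, |a 0 z.1 - c 0 z.1| * A z.2 + c 0 z.1 * |A z.2 - C z.2|
          ∂μ.prod (Measure.pi fun _ => μ) :=
          integral_mono (((ha 0).mul_prod hA).sub ((hc 0).mul_prod hC)).abs (hfirst.add hsecond)
            fun z => abs_mul_sub_mul_le (hc0 0 z.1) (Finset.prod_nonneg fun i _ => ha0 _ _)
      _ = (∫ t, |a 0 t - c 0 t| ∂μ) * 1 + 1 * ∫ y, |A y - C y| ∂Measure.pi fun _ => μ := by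
          rw [integral_add hfirst hsecond, integral_prod_mul (fun t => |a 0 t - c 0 t|) A,
            integral_prod_mul (c 0) fun y => |A y - C y|, hA1, hc1]
      _ ≤ _ := by
          rw [mul_one, one_mul]
          gcongr
          exact integral_abs_prod_sub_prod_le (fun i => ha0 i.succ) (fun i => hc0 i.succ)
            (fun i => ha i.succ) (fun i => hc i.succ) (fun i => ha1 i.succ) fun i => hc1 i.succ

lemma ae_eq_zero_of_ae_prod_eq_zero {ι : Type*} [Fintype ι] [DecidableEq ι] {q : ι → E → ℝ}
    (hq0 : ∀ i t, 0 ≤ q i t) (hq : ∀ i, Integrable (q i) μ) (hq1 : ∀ i, ∫ t, q i t ∂μ = 1)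
    {s : Set E} (hs : MeasurableSet s)
    (h : ∀ᵐ x ∂Measure.pi (fun _ => μ), x ∉ Set.univ.pi (fun _ => s) → ∏ i, q i (x i) = 0)
    (j : ι) : ∀ᵐ t ∂μ, t ∉ s → q j t = 0 := by
  -- On the slab `{x | x j ∉ s}` the product integrates to `∫ t in sᶜ, q j t`.
  set slab : ι → Set E := Function.update (fun _ => Set.univ) j sᶜ
  have hslab : MeasurableSet (Set.univ.pi slab) :=
    MeasurableSet.univ_pi fun i => by
      rcases eq_or_ne i j with rfl | hij
      · simpa [slab] using hs.compl
      · simp [slab, hij]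
  have hzero : ∫ x in Set.univ.pi slab, ∏ i, q i (x i) ∂Measure.pi (fun _ => μ) = 0 := by
    refine integral_eq_zero_of_ae ((ae_restrict_iff' hslab).2 ?_)
    filter_upwards [h] with x hx hxslab
    refine hx fun hxs => ?_
    have hxj : x j ∈ sᶜ := by simpa [slab] using hxslab j (Set.mem_univ j)
    exact hxj (hxs j (Set.mem_univ j))
  rw [Measure.restrict_pi_pi, integral_fintype_prod_eq_prod,
    Finset.prod_eq_single j (fun i _ hij => by simp [hij, hq1]) (by simp)] at hzero
  simp only [Function.update_self] at hzero
  have := (setIntegral_eq_zero_iff_of_nonneg_ae (Eventually.of_forall (hq0 j))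
    (hq j).integrableOn).1 hzero
  exact (ae_restrict_iff' hs.compl).1 this

end Product

theorem exists_prod_isHist1_integral_abs_sub_le {d b : ℕ} (hb : 0 < b) {q : Fin d → ℝ → ℝ}
    {K : ℝ≥0} (hq : ∀ j, LipschitzWith K (q j)) (hq0 : ∀ j t, 0 ≤ q j t)
    (hq1 : ∀ j, ∫ t, q j t = 1)
    (hsupp : ∀ᵐ x, x ∉ Set.Icc (0 : Fin d → ℝ) 1 → ∏ j, q j (x j) = 0) :
    ∃ H : Fin d → ℝ → ℝ, (∀ j, IsHist1 b (H j)) ∧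
      ∫ x : Fin d → ℝ, |∏ j, q j (x j) - ∏ j, H j (x j)| ≤ d * K / (Real.sqrt 12 * b) := by
  have hqi : ∀ j, Integrable (q j) := fun j => .of_integral_eq_one (hq1 j)
  rw [← Set.pi_univ_Icc] at hsupp
  choose H hH herr using fun j => exists_isHist1_integral_abs_sub_le hb (hq j) (hq0 j) (hq1 j)
    (ae_eq_zero_of_ae_prod_eq_zero hq0 hqi hq1 measurableSet_Icc hsupp j)
  refine ⟨H, hH, (integral_abs_prod_sub_prod_le hq0 (fun j => (hH j).nonneg) hqi
    (fun j => (hH j).integrable) hq1 fun j => (hH j).choose_spec.2.2).trans ?_⟩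
  calc ∑ j, ∫ t, |q j t - H j t| ≤ ∑ _j : Fin d, (K : ℝ) / (Real.sqrt 12 * b) :=
        Finset.sum_le_sum fun j _ => herr j
    _ = d * K / (Real.sqrt 12 * b) := by
        rw [Finset.sum_const, Finset.card_univ, Fintype.card_fin, nsmul_eq_mul, mul_div_assoc]

lemma abs_sum_add_sub_sum_add_le {ι : Type*} {s : Finset ι} {w q c : ι → ℝ}
    (hw : ∀ i ∈ s, 0 ≤ w i) {r t : ℝ} (hr : 0 ≤ r) (ht : 0 ≤ t) :
    |(∑ i ∈ s, w i * q i + r) - (∑ i ∈ s, w i * c i + t)| ≤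
      ∑ i ∈ s, w i * |q i - c i| + r + t := by
  have hsum : |∑ i ∈ s, w i * (q i - c i)| ≤ ∑ i ∈ s, w i * |q i - c i| := by
    refine (Finset.abs_sum_le_sum_abs _ _).trans_eq (Finset.sum_congr rfl fun i hi => ?_)
    rw [abs_mul, abs_of_nonneg (hw i hi)]
  have hrt : |r - t| ≤ r + t := (abs_sub r t).trans_eq (by rw [abs_of_nonneg hr, abs_of_nonneg ht])
  calc |(∑ i ∈ s, w i * q i + r) - (∑ i ∈ s, w i * c i + t)|
      = |∑ i ∈ s, w i * (q i - c i) + (r - t)| := by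
        congr 1
        simp only [mul_sub, Finset.sum_sub_distrib]
        ring
    _ ≤ _ := (abs_add_le _ _).trans (by linarith)

lemma sum_mul_le_of_forall_pos_le {ι : Type*} {s : Finset ι} {w e : ι → ℝ} {C : ℝ}
    (hw0 : ∀ i ∈ s, 0 ≤ w i) (hw1 : ∑ i ∈ s, w i ≤ 1) (hC : 0 ≤ C)
    (he : ∀ i ∈ s, 0 < w i → e i ≤ C) : ∑ i ∈ s, w i * e i ≤ C :=
  calc ∑ i ∈ s, w i * e i ≤ ∑ i ∈ s, w i * C := Finset.sum_le_sum fun i hi =>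
        (hw0 i hi).eq_or_lt.elim (fun h => by rw [← h, zero_mul, zero_mul])
          fun h => mul_le_mul_of_nonneg_left (he i hi h) (hw0 i hi)
    _ = (∑ i ∈ s, w i) * C := (Finset.sum_mul _ _ _).symm
    _ ≤ C := mul_le_of_le_one_left hC hw1

section Mixture

variable {α : Type*} [MeasurableSpace α] {μ : Measure α} {w : ℕ → ℝ} {Q : ℕ → α → ℝ}

lemma lintegral_enorm_mul_eq_ofReal (hw0 : ∀ i, 0 ≤ w i) (hQ0 : ∀ i x, 0 ≤ Q i x)
    (hQ : ∀ i, Integrable (Q i) μ) (hQ1 : ∀ i, ∫ x, Q i x ∂μ = 1) (i : ℕ) :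
    ∫⁻ x, ‖w i * Q i x‖ₑ ∂μ = ENNReal.ofReal (w i) := by
  rw [← ofReal_integral_norm_eq_lintegral_enorm ((hQ i).const_mul _)]
  simp_rw [Real.norm_eq_abs, abs_of_nonneg (mul_nonneg (hw0 i) (hQ0 i _))]
  rw [integral_const_mul, hQ1, mul_one]

lemma tsum_lintegral_enorm_mul_ne_top (hw0 : ∀ i, 0 ≤ w i) (hw : Summable w)
    (hQ0 : ∀ i x, 0 ≤ Q i x) (hQ : ∀ i, Integrable (Q i) μ) (hQ1 : ∀ i, ∫ x, Q i x ∂μ = 1) :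
    ∑' i, ∫⁻ x, ‖w i * Q i x‖ₑ ∂μ ≠ ⊤ := by
  simp_rw [lintegral_enorm_mul_eq_ofReal hw0 hQ0 hQ hQ1, ← ENNReal.ofReal_tsum_of_nonneg hw0 hw]
  exact ENNReal.ofReal_ne_top

lemma ae_summable_mixture (hw0 : ∀ i, 0 ≤ w i) (hw : Summable w) (hQ0 : ∀ i x, 0 ≤ Q i x)
    (hQ : ∀ i, Integrable (Q i) μ) (hQ1 : ∀ i, ∫ x, Q i x ∂μ = 1) :
    ∀ᵐ x ∂μ, Summable fun i => w i * Q i x := by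
  have hfin : ∑' i, eLpNorm (fun x => w i * Q i x) 1 μ ≠ ⊤ := by
    simpa only [eLpNorm_one_eq_lintegral_enorm] using
      tsum_lintegral_enorm_mul_ne_top hw0 hw hQ0 hQ hQ1
  filter_upwards [summable_norm_of_tsum_eLpNorm_ne_top le_rfl
    (fun i => ((hQ i).const_mul (w i)).aestronglyMeasurable) hfin] with x hx
  exact hx.of_norm

lemma integral_tsum_mixture (hw0 : ∀ i, 0 ≤ w i) (hw : Summable w) (hQ0 : ∀ i x, 0 ≤ Q i x)
    (hQ : ∀ i, Integrable (Q i) μ) (hQ1 : ∀ i, ∫ x, Q i x ∂μ = 1) :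
    ∫ x, ∑' i, w i * Q i x ∂μ = ∑' i, w i := by
  rw [integral_tsum (fun i => ((hQ i).const_mul _).aestronglyMeasurable)
    (tsum_lintegral_enorm_mul_ne_top hw0 hw hQ0 hQ hQ1)]
  simp_rw [integral_const_mul, hQ1, mul_one]

lemma ae_eq_zero_of_mixture_eq_zero (hw0 : ∀ i, 0 ≤ w i) (hQ0 : ∀ i x, 0 ≤ Q i x)
    (hsumm : ∀ᵐ x ∂μ, Summable fun i => w i * Q i x) {p : α → ℝ}
    (hpQ : ∀ᵐ x ∂μ, p x = ∑' i, w i * Q i x) {s : Set α} (hps : ∀ x ∉ s, p x = 0) {i : ℕ}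
    (hwi : 0 < w i) : ∀ᵐ x ∂μ, x ∉ s → Q i x = 0 := by
  filter_upwards [hpQ, hsumm] with x hpx hsx hxs
  have hle : w i * Q i x ≤ 0 := by
    rw [← hps x hxs, hpx]
    exact hsx.le_tsum i fun j _ => mul_nonneg (hw0 j) (hQ0 j x)
  exact le_antisymm (nonpos_of_mul_nonpos_right hle hwi) (hQ0 i x)

theorem integral_abs_sub_truncation_le (hw0 : ∀ i, 0 ≤ w i) (hw : HasSum w 1)
    (hQ0 : ∀ i x, 0 ≤ Q i x) (hQ : ∀ i, Integrable (Q i) μ) (hQ1 : ∀ i, ∫ x, Q i x ∂μ = 1)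
    {p : α → ℝ} (hp : Integrable p μ) (hpQ : ∀ᵐ x ∂μ, p x = ∑' i, w i * Q i x)
    {K : ℕ → α → ℝ} (hK : ∀ i, Integrable (K i) μ) (k : ℕ) (hK0 : ∀ x, 0 ≤ K k x)
    (hK1 : ∫ x, K k x ∂μ = 1) :
    ∫ x, |p x - (∑ i ∈ range (k + 1), w i * K i x + (∑' i, w (i + (k + 1))) * K k x)| ∂μ ≤
      ∑ i ∈ range (k + 1), w i * ∫ x, |Q i x - K i x| ∂μ + 2 * ∑' i, w (i + (k + 1)) := by
  set T := ∑' i, w (i + (k + 1))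
  set R := fun x => ∑' i, w (i + (k + 1)) * Q (i + (k + 1)) x
  have hsplit : ∀ᵐ x ∂μ, p x = ∑ i ∈ range (k + 1), w i * Q i x + R x := by
    filter_upwards [hpQ, ae_summable_mixture hw0 hw.summable hQ0 hQ hQ1] with x hpx hsx
    rw [hpx, hsx.sum_add_tsum_nat_add]
  have hR : Integrable R μ :=
    (hp.sub (integrable_finsetSum _ fun i _ => (hQ i).const_mul (w i))).congr
      (hsplit.mono fun x hx => by simp only [Pi.sub_apply, hx]; ring)
  have hR1 : ∫ x, R x ∂μ = T := integral_tsum_mixture (fun i => hw0 _)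
    ((summable_nat_add_iff _).2 hw.summable) (fun i => hQ0 _) (fun i => hQ _) fun i => hQ1 _
  have hdiff : ∀ i, Integrable (fun x => w i * |Q i x - K i x|) μ := fun i =>
    ((hQ i).sub (hK i)).abs.const_mul (w i)
  have hsum : Integrable (fun x => ∑ i ∈ range (k + 1), w i * |Q i x - K i x|) μ :=
    integrable_finsetSum _ fun i _ => hdiff i
  have hsumR : Integrable (fun x => ∑ i ∈ range (k + 1), w i * |Q i x - K i x| + R x) μ :=
    hsum.add hR
  calc _ ≤ ∫ x, ∑ i ∈ range (k + 1), w i * |Q i x - K i x| + R x + T * K k x ∂μ := by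
        refine integral_mono_ae (hp.sub ((integrable_finsetSum _ fun i _ =>
          (hK i).const_mul (w i)).add ((hK k).const_mul T))).abs (hsumR.add ((hK k).const_mul T))
          (hsplit.mono fun x hx => ?_)
        dsimp only
        rw [hx]
        exact abs_sum_add_sub_sum_add_le (fun i _ => hw0 i)
          (tsum_nonneg fun i => mul_nonneg (hw0 _) (hQ0 _ x))
          (mul_nonneg (tsum_nonneg fun i => hw0 _) (hK0 x))
    _ = ∑ i ∈ range (k + 1), w i * ∫ x, |Q i x - K i x| ∂μ + 2 * T := by
        rw [integral_add hsumR ((hK k).const_mul T), integral_add hsum hR,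
          integral_finsetSum _ fun i _ => hdiff i,
          integral_const_mul, hR1, hK1]
        simp_rw [integral_const_mul]
        ring

end Mixture

lemma isLowRankHist_sum_range {d b k : ℕ} {v : ℕ → ℝ} (hv0 : ∀ i, 0 ≤ v i)
    (hv1 : ∑ i ∈ range k, v i = 1) {H : ℕ → Fin d → ℝ → ℝ} (hH : ∀ i j, IsHist1 b (H i j)) :
    IsLowRankHist d b k fun x => ∑ i ∈ range k, v i * ∏ j, H i j (x j) :=
  ⟨fun i => v i, fun i => H i, fun i => hv0 i, by rwa [Fin.sum_univ_eq_sum_range v k],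
    fun i j => hH i j,
    fun x => (Fin.sum_univ_eq_sum_range (fun i => v i * ∏ j, H i j (x j)) k).symm⟩

lemma isLowRankHist_truncation {d b : ℕ} {w : ℕ → ℝ} (hw0 : ∀ i, 0 ≤ w i) (hw : HasSum w 1)
    {H : ℕ → Fin d → ℝ → ℝ} (hH : ∀ i j, IsHist1 b (H i j)) (k : ℕ) :
    IsLowRankHist d b (k + 1) fun x => ∑ i ∈ range (k + 1), w i * ∏ j, H i j (x j) +
      (∑' i, w (i + (k + 1))) * ∏ j, H k j (x j) := by
  set T := ∑' i, w (i + (k + 1))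
  have hT : 0 ≤ T := tsum_nonneg fun i => hw0 _
  have hv1 : ∑ i ∈ range (k + 1), (w i + if i = k then T else 0) = 1 := by
    simp only [Finset.sum_add_distrib, Finset.sum_ite_eq', Finset.mem_range, Nat.lt_succ_self,
      if_true, T, hw.summable.sum_add_tsum_nat_add, hw.tsum_eq]
  convert isLowRankHist_sum_range (fun i => add_nonneg (hw0 i) (by split_ifs <;> simp [hT])) hv1 hH
    using 2 with x
  simp [add_mul, Finset.sum_add_distrib]

theorem exists_isLowRankHist_integral_abs_sub_le {d b : ℕ} (hb : 0 < b) {w : ℕ → ℝ}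
    {q : ℕ → Fin d → ℝ → ℝ} {L : ℕ → ℝ≥0} (hw0 : ∀ i, 0 ≤ w i) (hw : HasSum w 1)
    (hq : ∀ i j, LipschitzWith (L i) (q i j)) (hq0 : ∀ i j t, 0 ≤ q i j t)
    (hq1 : ∀ i j, ∫ t, q i j t = 1) {p : (Fin d → ℝ) → ℝ} (hp : Integrable p)
    (hpq : ∀ᵐ x, p x = ∑' i, w i * ∏ j, q i j (x j))
    (hpsupp : ∀ x ∉ Set.Icc (0 : Fin d → ℝ) 1, p x = 0) (k : ℕ) {Λ : ℝ}
    (hΛ : ∀ i ≤ k, (L i : ℝ) ≤ Λ) :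
    ∃ h, IsLowRankHist d b (k + 1) h ∧
      ∫ x, |p x - h x| ≤ d * Λ / (Real.sqrt 12 * b) + 2 * ∑' i, w (i + (k + 1)) := by
  set Q := fun i (x : Fin d → ℝ) => ∏ j, q i j (x j)
  have hQ0 : ∀ i x, 0 ≤ Q i x := fun i x => Finset.prod_nonneg fun j _ => hq0 i j _
  have hQ : ∀ i, Integrable (Q i) := fun i =>
    Integrable.fintype_prod fun j => .of_integral_eq_one (hq1 i j)
  have hQ1 : ∀ i, ∫ x, Q i x = 1 := fun i => integral_prod_eval_eq_one (hq1 i)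
  have hcomp : ∀ i, ∃ H : Fin d → ℝ → ℝ, (∀ j, IsHist1 b (H j)) ∧
      (0 < w i → ∫ x, |Q i x - ∏ j, H j (x j)| ≤ d * L i / (Real.sqrt 12 * b)) := by
    intro i
    by_cases hwi : 0 < w i
    · obtain ⟨H, hH, herr⟩ := exists_prod_isHist1_integral_abs_sub_le hb (hq i) (hq0 i) (hq1 i)
        (ae_eq_zero_of_mixture_eq_zero hw0 hQ0 (ae_summable_mixture hw0 hw.summable hQ0 hQ hQ1)
          hpq hpsupp hwi)
      exact ⟨H, hH, fun _ => herr⟩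
    · obtain ⟨H, hH⟩ := exists_isHist1 hb
      exact ⟨fun _ => H, fun _ => hH, fun h => absurd h hwi⟩
  choose H hH herr using hcomp
  refine ⟨_, isLowRankHist_truncation hw0 hw hH k, (integral_abs_sub_truncation_le hw0 hw hQ0 hQ
    hQ1 hp hpq (fun i => Integrable.fintype_prod fun j => (hH i j).integrable) k
    (fun x => Finset.prod_nonneg fun j _ => (hH k j).nonneg _)
    (integral_prod_eval_eq_one fun j => (hH k j).choose_spec.2.2)).trans ?_⟩
  have hΛ0 : 0 ≤ Λ := (L 0).coe_nonneg.trans (hΛ 0 k.zero_le)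
  gcongr
  refine sum_mul_le_of_forall_pos_le (fun i _ => hw0 i) (sum_le_hasSum _ (fun i _ => hw0 i) hw)
    (by positivity) fun i hi hwi => (herr i hwi).trans ?_
  gcongr
  exact hΛ i (Nat.lt_succ_iff.1 (Finset.mem_range.1 hi))

/-- The paper's `k ≥ 1` is `k + 1` here; with `0`-indexed sequences its `L̃_k` and `W_k` are
`Lt k` and `W k`. -/
theorem nl_class_bias_bound_general
    (d b k : ℕ) (hb : 1 ≤ b)
    (W Lt : ℕ → ℝ)
    (hL0 : ∀ i, 0 ≤ Lt i) (hLmono : ∀ i, Lt i ≤ Lt (i + 1))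
    (p : (Fin d → ℝ) → ℝ) (hp : MemD d p) (hcls : MemNLClass d p W Lt) :
    ∃ h : (Fin d → ℝ) → ℝ, IsLowRankHist d b (k + 1) h ∧
      ∫ x, |p x - h x| ≤ (d : ℝ) * Lt k / (Real.sqrt 12 * b) + 2 * W k := by
  obtain ⟨w, L, ⟨q, hw0, -, hw, hq, hpq⟩, hwL⟩ := hcls
  have hLip : ∀ i j, LipschitzWith (L i).toNNReal (q i j) := fun i j =>
    .of_dist_le' fun x y => by simpa only [Real.dist_eq] using (hq i j).2 x y
  have hLk : ∀ i ≤ k, ((L i).toNNReal : ℝ) ≤ Lt k := fun i hi => by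
    rw [Real.coe_toNNReal']
    exact max_le ((hwL i).1.trans (monotone_nat_of_le_succ hLmono hi)) (hL0 k)
  obtain ⟨h, hh, herr⟩ := exists_isLowRankHist_integral_abs_sub_le hb hw0 hw hLip
    (fun i j => (hLip i j).continuous.nonneg_of_ae_nonneg (hq i j).1.2.1)
    (fun i j => (hq i j).1.2.2) (.of_integral_eq_one hp.2.2.1)
    hpq hp.2.2.2 k hLk
  exact ⟨h, hh, herr.trans (by gcongr; exact (hwL k).2)⟩

/-- **Lemma 11.** Bias bound over an NL-class.  The paper's `k ∈ ℕ = {1,2,...}`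
is represented as `k+1` with `k : ℕ`; by the `0`-indexing convention, the paper's
`L̃_k` and `W_k` are `Lt k` and `W k`. -/
theorem nl_class_bias_bound
    (d b k : ℕ) (hd : 1 ≤ d) (hb : 1 ≤ b)
    (W Lt : ℕ → ℝ)
    (hW0 : ∀ i, 0 ≤ W i) (hWanti : ∀ i, W (i + 1) ≤ W i)
    (hWlim : Tendsto W atTop (nhds 0))
    (hL0 : ∀ i, 0 ≤ Lt i) (hLmono : ∀ i, Lt i ≤ Lt (i + 1))
    (p : (Fin d → ℝ) → ℝ) (hp : MemD d p) (hcls : MemNLClass d p W Lt) :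
    ∃ h : (Fin d → ℝ) → ℝ, IsLowRankHist d b (k + 1) h ∧
      ∫ x, |p x - h x| ≤ (d : ℝ) * Lt k / (Real.sqrt 12 * b) + 2 * W k :=
  nl_class_bias_bound_general d b k hb W Lt hL0 hLmono p hp hcls
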